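/- Uniform gap bounds between the likelihood, variational, and profile criteria: assume (A3), i.e. there is 0 < γ < 1 with α_q ≥ γ for all q. For every adjacency matrix X_{[n]}, every such α and every Q×Q matrix π with entries in [0,1], letting ẑ_{[n]} = ẑ_{[n]}(π) maximize z ↦ L1(X_{[n]}; z, π) and τ̂_{[n]} maximize τ ↦ 𝒥(X_{[n]}; τ, α, π) over 𝒮_n, one has |L2(X_{[n]}; α, π) − L1(X_{[n]}; ẑ_{[n]}, π)| ≤ n log(1/γ) and |𝒥(X_{[n]}; τ̂_{[n]}, α, π) − L1(X_{[n]}; ẑ_{[n]}, π)| ≤ n log(1/γ). -/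

import Mathlib

/-!
The likelihood `L2` is the logarithm of an average of `exp (L1 x z π)` under the product
weights `∏ i, α (z i)`, and `𝒥 (τ)` is the average of `L1 x z π` under the product weights
`∏ i, τ i (z i)` minus a sum of Kullback–Leibler divergences. Hence both are at most
`L1 x ẑ π`. Conversely, keeping only the term `z = ẑ` in `L2`, or evaluating `𝒥` at the
indicator of `ẑ`, loses at most `∑ i, log (1 / α (ẑ i)) ≤ n log (1 / γ)`.
-/

open scoped Classical
open Finset

/-- Conditional log-likelihood `L1(X; z, π)`. -/
noncomputable def L1 {Q n : ℕ} (x : Fin n → Fin n → Bool) (z : Fin n → Fin Q)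
    (π : Fin Q → Fin Q → ℝ) : ℝ :=
  ∑ i : Fin n, ∑ j : Fin n, if i = j then 0 else
    (if x i j then Real.log (π (z i) (z j)) else Real.log (1 - π (z i) (z j)))

/-- SBM log-likelihood `L2(X; α, π) = log ( Σ_z exp(L1(X;z,π)) Π_i α_{z_i} )`. -/
noncomputable def L2 {Q n : ℕ} (x : Fin n → Fin n → Bool) (α : Fin Q → ℝ)
    (π : Fin Q → Fin Q → ℝ) : ℝ :=
  Real.log (∑ z : Fin n → Fin Q, Real.exp (L1 x z π) * ∏ i, α (z i))

/-- Membership of `τ` in `𝒮_n`: each row of `τ` is a probability vector. -/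
def memS {Q n : ℕ} (τ : Fin n → Fin Q → ℝ) : Prop :=
  (∀ i q, 0 ≤ τ i q) ∧ ∀ i, ∑ q, τ i q = 1

/-- The variational log-likelihood `𝒥(X; τ, α, π)` (with the convention `0·log 0 = 0`). -/
noncomputable def Jfun {Q n : ℕ} (x : Fin n → Fin n → Bool) (τ : Fin n → Fin Q → ℝ)
    (α : Fin Q → ℝ) (π : Fin Q → Fin Q → ℝ) : ℝ :=
  (∑ i : Fin n, ∑ j : Fin n, if i = j then 0 else
      ∑ q, ∑ l, (if x i j then Real.log (π q l) else Real.log (1 - π q l)) * τ i q * τ j l)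
    - ∑ i, ∑ q, τ i q * (Real.log (τ i q) - Real.log (α q))

open Real (log exp)

theorem sub_le_mul_log_sub_log {t a : ℝ} (ht : 0 ≤ t) (ha : 0 < a) :
    t - a ≤ t * (log t - log a) := by
  rcases ht.eq_or_lt with rfl | ht
  · simpa using ha.le
  · have h := Real.one_sub_inv_le_log_of_pos (div_pos ht ha)
    rw [Real.log_div ht.ne' ha.ne', inv_div] at h
    calc t - a = t * (1 - a / t) := by field_simp
      _ ≤ t * (log t - log a) := mul_le_mul_of_nonneg_left h ht.le

theorem sum_mul_log_sub_log_nonneg {κ : Type*} [Fintype κ] (τ α : κ → ℝ) (hτ : ∀ q, 0 ≤ τ q)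
    (hα : ∀ q, 0 < α q) (hsum : ∑ q, α q ≤ ∑ q, τ q) :
    0 ≤ ∑ q, τ q * (log (τ q) - log (α q)) :=
  calc 0 ≤ ∑ q, (τ q - α q) := by rw [sum_sub_distrib]; linarith
    _ ≤ _ := sum_le_sum fun q _ => sub_le_mul_log_sub_log (hτ q) (hα q)

section ProductWeights

variable {ι κ : Type*} [Fintype ι] [DecidableEq ι] [Fintype κ]

theorem sum_prod_eq_one (τ : ι → κ → ℝ) (hτ : ∀ k, ∑ m, τ k m = 1) :
    ∑ z : ι → κ, ∏ k, τ k (z k) = 1 := by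
  rw [← Fintype.prod_sum]
  simp [hτ]

theorem sum_prod_mul_le (τ : ι → κ → ℝ) (hτ0 : ∀ k m, 0 ≤ τ k m) (hτ : ∀ k, ∑ m, τ k m = 1)
    (f : (ι → κ) → ℝ) {M : ℝ} (hf : ∀ z, f z ≤ M) :
    ∑ z : ι → κ, (∏ k, τ k (z k)) * f z ≤ M :=
  calc ∑ z : ι → κ, (∏ k, τ k (z k)) * f z ≤ ∑ z : ι → κ, (∏ k, τ k (z k)) * M :=
        sum_le_sum fun z _ => mul_le_mul_of_nonneg_left (hf z) (prod_nonneg fun k _ => hτ0 k _)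
    _ = M := by rw [← sum_mul, sum_prod_eq_one τ hτ, one_mul]

variable [DecidableEq κ]

theorem sum_prod_mul_ite_mul_ite (τ : ι → κ → ℝ) (hτ : ∀ k, ∑ m, τ k m = 1) {i j : ι}
    (hij : i ≠ j) (q l : κ) :
    ∑ z : ι → κ, (∏ k, τ k (z k)) * (if z i = q then 1 else 0) * (if z j = l then 1 else 0)
      = τ i q * τ j l := by
  set g : ι → κ → ℝ := fun k m =>
    (if k = i then (if m = q then 1 else 0) else 1) * (if k = j then (if m = l then 1 else 0) else 1)
  have hprod : ∀ z : ι → κ, (∏ k, τ k (z k)) * (if z i = q then 1 else 0) *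
      (if z j = l then 1 else 0) = ∏ k, τ k (z k) * g k (z k) := fun z => by
    simp only [g, prod_mul_distrib, prod_ite_eq', mem_univ, if_true, mul_assoc]
  have hrow : ∀ k, ∑ m, τ k m * g k m
      = (if k = i then τ i q else 1) * (if k = j then τ j l else 1) := fun k => by
    by_cases hki : k = i
    · subst hki; simp [g, hij]
    · by_cases hkj : k = j
      · subst hkj; simp [g, hki]
      · simp only [g, if_neg hki, if_neg hkj, mul_one, hτ k]
  calc _ = ∑ z : ι → κ, ∏ k, τ k (z k) * g k (z k) := sum_congr rfl fun z _ => hprod z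
    _ = ∏ k, ∑ m, τ k m * g k m := (Fintype.prod_sum fun k m => τ k m * g k m).symm
    _ = ∏ k, (if k = i then τ i q else 1) * (if k = j then τ j l else 1) :=
        prod_congr rfl fun k _ => hrow k
    _ = τ i q * τ j l := by simp only [prod_mul_distrib, prod_ite_eq', mem_univ, if_true]

theorem sum_prod_mul_apply_apply (τ : ι → κ → ℝ) (hτ : ∀ k, ∑ m, τ k m = 1) {i j : ι}
    (hij : i ≠ j) (F : κ → κ → ℝ) :
    ∑ z : ι → κ, (∏ k, τ k (z k)) * F (z i) (z j) = ∑ q, ∑ l, F q l * τ i q * τ j l := by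
  have hF : ∀ z : ι → κ, F (z i) (z j)
      = ∑ q, ∑ l, F q l * ((if z i = q then 1 else 0) * (if z j = l then 1 else 0)) := fun z => by
    simp [mul_ite, sum_ite_eq]
  calc ∑ z : ι → κ, (∏ k, τ k (z k)) * F (z i) (z j)
      = ∑ q, ∑ l, F q l * ∑ z : ι → κ,
          (∏ k, τ k (z k)) * (if z i = q then 1 else 0) * (if z j = l then 1 else 0) := by
        simp_rw [hF, mul_sum]
        rw [sum_comm]
        refine sum_congr rfl fun q _ => ?_
        rw [sum_comm]
        exact sum_congr rfl fun l _ => sum_congr rfl fun z _ => by ring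
    _ = ∑ q, ∑ l, F q l * τ i q * τ j l := by
        simp_rw [sum_prod_mul_ite_mul_ite τ hτ hij, mul_assoc]

end ProductWeights

section StochasticBlockModel

variable {Q n : ℕ} (x : Fin n → Fin n → Bool) (π : Fin Q → Fin Q → ℝ) (α : Fin Q → ℝ)

theorem Jfun_eq_sum_prod_mul_L1_sub (τ : Fin n → Fin Q → ℝ) (hτ : ∀ i, ∑ q, τ i q = 1) :
    Jfun x τ α π = ∑ z : Fin n → Fin Q, (∏ k, τ k (z k)) * L1 x z π
      - ∑ i, ∑ q, τ i q * (log (τ i q) - log (α q)) := by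
  unfold Jfun L1
  congr 1
  symm
  simp_rw [mul_sum]
  rw [sum_comm]
  refine sum_congr rfl fun i _ => ?_
  rw [sum_comm]
  refine sum_congr rfl fun j _ => ?_
  by_cases hij : i = j
  · simp [hij]
  · simp only [if_neg hij]
    exact sum_prod_mul_apply_apply τ hτ hij
      fun q l => if x i j then log (π q l) else log (1 - π q l)

theorem Jfun_le_of_forall_L1_le (hα : ∀ q, 0 < α q) (hαsum : ∑ q, α q = 1)
    {τ : Fin n → Fin Q → ℝ} (hτ : memS τ) {M : ℝ} (hM : ∀ z, L1 x z π ≤ M) :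
    Jfun x τ α π ≤ M := by
  obtain ⟨hτ0, hτ1⟩ := hτ
  have hKL : 0 ≤ ∑ i, ∑ q, τ i q * (log (τ i q) - log (α q)) :=
    sum_nonneg fun i _ => sum_mul_log_sub_log_nonneg _ _ (hτ0 i) hα (by rw [hαsum, hτ1 i])
  rw [Jfun_eq_sum_prod_mul_L1_sub x π α τ hτ1]
  linarith [sum_prod_mul_le τ hτ0 hτ1 (fun z => L1 x z π) hM]

theorem exp_L1_mul_prod_pos (hα : ∀ q, 0 < α q) (z : Fin n → Fin Q) :
    0 < exp (L1 x z π) * ∏ i, α (z i) :=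
  mul_pos (Real.exp_pos _) (prod_pos fun _ _ => hα _)

theorem L2_le_of_forall_L1_le (hα : ∀ q, 0 < α q) (hαsum : ∑ q, α q = 1)
    {M : ℝ} (hM : ∀ z, L1 x z π ≤ M) :
    L2 x α π ≤ M := by
  have hterm := exp_L1_mul_prod_pos x π α hα
  obtain ⟨q₀, -⟩ := exists_ne_zero_of_sum_ne_zero (hαsum ▸ one_ne_zero : ∑ q, α q ≠ 0)
  rw [L2, Real.log_le_iff_le_exp (sum_pos (fun z _ => hterm z) ⟨fun _ => q₀, mem_univ _⟩)]
  simp_rw [mul_comm (exp _)]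
  exact sum_prod_mul_le (fun _ => α) (fun _ q => (hα q).le) (fun _ => hαsum) _
    fun z => Real.exp_le_exp.2 (hM z)

theorem L1_add_sum_log_le_L2 (hα : ∀ q, 0 < α q) (z : Fin n → Fin Q) :
    L1 x z π + ∑ i, log (α (z i)) ≤ L2 x α π := by
  have hterm := exp_L1_mul_prod_pos x π α hα
  rw [← Real.log_exp (L1 x z π), ← Real.log_prod fun i _ => (hα (z i)).ne',
    ← Real.log_mul (Real.exp_pos _).ne' (prod_pos fun i _ => hα (z i)).ne']
  exact Real.log_le_log (hterm z) (single_le_sum (fun z _ => (hterm z).le) (mem_univ z))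

theorem memS_indicator (z : Fin n → Fin Q) : memS fun i q => if q = z i then (1 : ℝ) else 0 :=
  ⟨fun i q => by dsimp only; split_ifs <;> norm_num, fun i => by simp⟩

theorem Jfun_indicator (z : Fin n → Fin Q) :
    Jfun x (fun i q => if q = z i then 1 else 0) α π = L1 x z π + ∑ i, log (α (z i)) := by
  have hprod : ∀ z' : Fin n → Fin Q, ∏ k, (if z' k = z k then (1 : ℝ) else 0)
      = if z' = z then 1 else 0 := fun z' => by
    simp [Fintype.prod_boole, funext_iff]
  rw [Jfun_eq_sum_prod_mul_L1_sub x π α _ (memS_indicator z).2]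
  simp [hprod, ite_mul]

end StochasticBlockModel

theorem likelihood_gap_bounds_general
    (Q n : ℕ) (γ : ℝ) (hγ0 : 0 < γ)
    (x : Fin n → Fin n → Bool) (α : Fin Q → ℝ) (π : Fin Q → Fin Q → ℝ)
    (hαsum : ∑ q, α q = 1)
    (hA3 : ∀ q, γ ≤ α q)
    (zh : Fin n → Fin Q) (hzh : ∀ z : Fin n → Fin Q, L1 x z π ≤ L1 x zh π)
    (τh : Fin n → Fin Q → ℝ) (hτh : memS τh)
    (hτmax : ∀ τ : Fin n → Fin Q → ℝ, memS τ → Jfun x τ α π ≤ Jfun x τh α π) :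
    |L2 x α π - L1 x zh π| ≤ n * Real.log (1 / γ) ∧
    |Jfun x τh α π - L1 x zh π| ≤ n * Real.log (1 / γ) := by
  have hα : ∀ q, 0 < α q := fun q => hγ0.trans_le (hA3 q)
  have hlog : -(n * log (1 / γ)) ≤ ∑ i, log (α (zh i)) := by
    rw [one_div, Real.log_inv, mul_neg, neg_neg]
    simpa using sum_le_sum fun i (_ : i ∈ univ) => Real.log_le_log hγ0 (hA3 (zh i))
  have hL2_le := L2_le_of_forall_L1_le x π α hα hαsum hzh
  have hL2_ge := L1_add_sum_log_le_L2 x π α hα zh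
  have hJ_le := Jfun_le_of_forall_L1_le x π α hα hαsum hτh hzh
  have hJ_ge := Jfun_indicator x π α zh ▸ hτmax _ (memS_indicator zh)
  constructor <;> rw [abs_le] <;> constructor <;> linarith

/-- Uniform gap bounds between the likelihood, variational, and profile criteria: if all
group proportions satisfy `α_q ≥ γ` (assumption (A3)), then both `|L2 − L1(ẑ)|` and
`|𝒥(τ̂) − L1(ẑ)|` are at most `n log(1/γ)`, where `ẑ` maximizes `z ↦ L1(X; z, π)` and
`τ̂` maximizes `τ ↦ 𝒥(X; τ, α, π)` over `𝒮_n`. -/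
theorem likelihood_gap_bounds
    (Q n : ℕ) (hQ : 0 < Q) (γ : ℝ) (hγ0 : 0 < γ) (hγ1 : γ < 1)
    (x : Fin n → Fin n → Bool) (α : Fin Q → ℝ) (π : Fin Q → Fin Q → ℝ)
    (hα : ∀ q, 0 ≤ α q) (hαsum : ∑ q, α q = 1)
    (hA3 : ∀ q, γ ≤ α q)
    (hπ : ∀ q l, π q l ∈ Set.Icc (0:ℝ) 1)
    (zh : Fin n → Fin Q) (hzh : ∀ z : Fin n → Fin Q, L1 x z π ≤ L1 x zh π)
    (τh : Fin n → Fin Q → ℝ) (hτh : memS τh)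
    (hτmax : ∀ τ : Fin n → Fin Q → ℝ, memS τ → Jfun x τ α π ≤ Jfun x τh α π) :
    |L2 x α π - L1 x zh π| ≤ n * Real.log (1 / γ) ∧
    |Jfun x τh α π - L1 x zh π| ≤ n * Real.log (1 / γ) :=
  likelihood_gap_bounds_general Q n γ hγ0 x α π hαsum hA3 zh hzh τh hτh hτmax
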